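/- arXiv:math/0208144 — 4 statements merged into one kernel-verified Lean document; each statement's English description precedes it below -/
import Mathlib

section
/- Let I be an iterated-integral symbol on a set S with values in a commutative ℚ-algebra A. Then for every m ≥ 0 and all a_0, a_1, ..., a_{m+1} ∈ S one has I(a_0; a_1, ..., a_m; a_{m+1}) = (−1)^m · I(a_{m+1}; a_m, ..., a_1; a_0). -/
/-- The multiset of all shuffles of two lists. -/
def shuffles {α : Type*} : List α → List α → Multiset (List α)
  | [], l => {l}
  | x :: l, [] => {x :: l}
  | a :: l, b :: m =>
      ((shuffles l (b :: m)).map (a :: ·)) + ((shuffles (a :: l) m).map (b :: ·))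
  termination_by l m => l.length + m.length

/-- An iterated-integral symbol on a set `S` with values in a commutative ℚ-algebra `A`:
a function `I` assigning to `a, b ∈ S` and a finite sequence in `S` an element of `A`,
subject to (i) the unit relation, (ii) the shuffle product formula, (iii) the path
composition formula and (iv) loop vanishing. -/
structure IterIntSymbol (S : Type*) (A : Type*) [CommRing A] [Algebra ℚ A] where
  I : S → List S → S → A
  unit : ∀ a b : S, I a [] b = 1
  shuffle_mul : ∀ (a b : S) (l₁ l₂ : List S),
    I a l₁ b * I a l₂ b = ((shuffles l₁ l₂).map fun w => I a w b).sum
  path_comp : ∀ (a b x : S) (l : List S),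
    I a l b = ∑ k ∈ Finset.range (l.length + 1), I a (l.take k) x * I x (l.drop k) b
  loop : ∀ (a : S) (l : List S), l ≠ [] → I a l a = 0

/-!
Composing a path with its reverse gives a loop, so path composition and loop vanishing give
`∑ₖ I(a; l₍<k₎; b) · I(b; l₍≥k₎; a) = 0`. By induction each factor `I(a; l₍<k₎; b)` with
`k < |l|` is `(-1)^k I(b; reverse l₍<k₎; a)`, and the shuffle product turns the sum into
`I(a; l; b) + ∑_{k<|l|} (-1)^k ∑_{w ∈ reverse l₍<k₎ ⧢ l₍≥k₎} I(b; w; a)`. The alternating sum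
`∑_{k ≤ |l|} (-1)^k (reverse l₍<k₎ ⧢ l₍≥k₎)` vanishes for nonempty `l` (the shuffle-algebra
antipode identity); its last term is `(-1)^|l| · reverse l`, which gives the claim.
-/

open Finset

section Shuffles

variable {α : Type*}

theorem shuffles_nil_left (v : List α) : shuffles [] v = {v} := by
  rw [shuffles]

theorem shuffles_nil_right (u : List α) : shuffles u [] = {u} := by
  cases u <;> rw [shuffles]

theorem shuffles_cons_cons (a b : α) (u v : List α) :
    shuffles (a :: u) (b :: v)
      = (shuffles u (b :: v)).map (a :: ·) + (shuffles (a :: u) v).map (b :: ·) := by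
  rw [shuffles]

variable {A : Type*} [CommRing A] (g : List α → A)

/-- The prefix `u` generalizes the antipode sum (the case `u = []`) so that it can be computed
by induction on `v`. -/
def alternatingShuffleSum (u v : List α) : A :=
  ∑ k ∈ range (v.length + 1),
    (-1) ^ k * ((shuffles ((v.take k).reverse ++ u) (v.drop k)).map g).sum

theorem alternatingShuffleSum_nil_right (u : List α) : alternatingShuffleSum g u [] = g u := by
  simp [alternatingShuffleSum, shuffles_nil_right]

theorem alternatingShuffleSum_cons_right (u : List α) (y : α) (v : List α) :
    alternatingShuffleSum g u (y :: v)
      = ((shuffles u (y :: v)).map g).sum - alternatingShuffleSum g (y :: u) v := by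
  simp only [alternatingShuffleSum, List.length_cons, sum_range_succ' _ (v.length + 1),
    List.take_succ_cons, List.drop_succ_cons, List.reverse_cons, List.append_assoc,
    List.singleton_append, pow_succ, List.take_zero, List.drop_zero, List.reverse_nil,
    List.nil_append, pow_zero, one_mul, mul_neg_one, neg_mul, sum_neg_distrib]
  ring

theorem alternatingShuffleSum_cons_left (x : α) (u v : List α) :
    alternatingShuffleSum g (x :: u) v = ((shuffles u v).map fun w => g (x :: w)).sum := by
  induction v generalizing x u with
  | nil => simp [alternatingShuffleSum_nil_right, shuffles_nil_right]
  | cons y v ih =>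
    rw [alternatingShuffleSum_cons_right, ih y (x :: u), shuffles_cons_cons, Multiset.map_add,
      Multiset.sum_add, Multiset.map_map, Multiset.map_map]
    exact add_sub_cancel_right _ _

theorem alternatingShuffleSum_nil_left {v : List α} (hv : v ≠ []) :
    alternatingShuffleSum g [] v = 0 := by
  obtain ⟨y, v, rfl⟩ := List.exists_cons_of_ne_nil hv
  rw [alternatingShuffleSum_cons_right, alternatingShuffleSum_cons_left, shuffles_nil_left,
    shuffles_nil_left]
  simp

end Shuffles

namespace IterIntSymbol

variable {S A : Type*} [CommRing A] [Algebra ℚ A] (𝕀 : IterIntSymbol S A)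

theorem sum_I_take_mul_I_drop_eq_zero (a b : S) {l : List S} (hl : l ≠ []) :
    ∑ k ∈ range (l.length + 1), 𝕀.I a (l.take k) b * 𝕀.I b (l.drop k) a = 0 := by
  rw [← 𝕀.path_comp, 𝕀.loop a l hl]

end IterIntSymbol

theorem iterIntSymbol_reverse {S A : Type*} [CommRing A] [Algebra ℚ A]
    (𝕀 : IterIntSymbol S A) (a b : S) (l : List S) :
    𝕀.I a l b = (-1 : A) ^ l.length * 𝕀.I b l.reverse a := by
  rcases eq_or_ne l [] with rfl | hl
  · simp [𝕀.unit]
  have hprefix : ∀ k ∈ range l.length,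
      𝕀.I a (l.take k) b * 𝕀.I b (l.drop k) a
        = (-1) ^ k * ((shuffles (l.take k).reverse (l.drop k)).map (𝕀.I b · a)).sum := by
    intro k hk
    have hk : k < l.length := mem_range.mp hk
    have hrev := iterIntSymbol_reverse 𝕀 b a (l.take k).reverse
    rw [List.reverse_reverse, List.length_reverse, List.length_take_of_le hk.le] at hrev
    rw [← 𝕀.shuffle_mul, hrev, ← mul_assoc, ← mul_assoc, ← pow_add,
      Even.neg_one_pow ⟨k, rfl⟩, one_mul]
  have hloop := 𝕀.sum_I_take_mul_I_drop_eq_zero a b hl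
  have hantipode := alternatingShuffleSum_nil_left (𝕀.I b · a) hl
  rw [sum_range_succ, sum_congr rfl hprefix, List.take_length, List.drop_length, 𝕀.unit,
    mul_one] at hloop
  rw [alternatingShuffleSum, sum_range_succ, List.take_length, List.drop_length,
    shuffles_nil_right] at hantipode
  simp only [List.append_nil, Multiset.map_singleton, Multiset.sum_singleton] at hantipode
  linear_combination hloop - hantipode
termination_by l.length
decreasing_by simp_all
end

section
/- Let F and G be admissible automorphisms of P̂(S), with coefficient families c_F and c_G, extended by the convention c_F(a; ; b) := 1 and c_G(a; ; b) := 1 for the empty middle sequence. Then the coefficient family of the composite F ∘ G (where (F ∘ G)(p) := F(G(p))) is given, for every m ≥ 1 and a_0, a_1, ..., a_{m+1} ∈ S, by c_{F∘G}(a_0; a_1, ..., a_m; a_{m+1}) = Σ_{0 = i_0 < i_1 < ... < i_k < i_{k+1} = m+1} c_G(a_0; a_{i_1}, ..., a_{i_k}; a_{m+1}) · ∏_{p=0}^{k} c_F(a_{i_p}; a_{i_p + 1}, ..., a_{i_{p+1} − 1}; a_{i_{p+1}}), the sum over all 0 ≤ k ≤ m and all subsequences {i_1 < ... < i_k} of {1,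 ..., m}. -/
/-!
STATEMENT 5. Let `F` and `G` be admissible automorphisms of `P̂(S)` with coefficient
families `c_F`, `c_G` (extended by `c(a; ; b) = 1` on the empty middle sequence). Then
the coefficient family of the composite `F ∘ G` is given by
`c_{F∘G}(a₀; a₁,…,a_m; a_{m+1}) = Σ_{0 = i₀ < i₁ < … < i_k < i_{k+1} = m+1}
  c_G(a₀; a_{i₁},…,a_{i_k}; a_{m+1}) · Π_{p=0}^{k} c_F(a_{i_p}; a_{i_p+1},…,a_{i_{p+1}−1}; a_{i_{p+1}})`.
-/

/-- All markings of a list: decompositions `l = b₀ ++ [c₁] ++ b₁ ++ … ++ [c_k] ++ b_k`,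
recorded as the chosen subsequence `[c₁,…,c_k]` together with the blocks `[b₀,…,b_k]`. -/
def marks {α : Type*} : List α → List (List α × List (List α))
  | [] => [([], [[]])]
  | x :: l =>
      ((marks l).map fun p => (x :: p.1, [] :: p.2)) ++
      ((marks l).map fun p => (p.1, (x :: p.2.headI) :: p.2.tail))

/-- `blockProd f a bs cs b = f(a; b₀; c₁) · f(c₁; b₁; c₂) ⋯ f(c_k; b_k; b)` where
`bs = [b₀,…,b_k]` and `cs = [c₁,…,c_k]`. -/
def blockProd {S M : Type*} [CommMonoid M] (f : S → List S → S → M) :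
    S → List (List S) → List S → S → M
  | _, [], _, _ => 1
  | a, [bl], [], b => f a bl b
  | a, bl :: bls, c :: cs, b => f a bl c * blockProd f c bls cs b
  | _, _ :: _ :: _, [], _ => 1

open scoped Classical

/-- Index of the basis path `p_{a, s₁, …, s_m, b}`: the triple `(a, [s₁, …, s_m], b)`. -/
abbrev PIdx (S : Type*) := S × List S × S

/-- The degree of a path: `p_{s₀, …, s_n}` has degree `n − 1`. -/
def pdeg {S : Type*} (p : PIdx S) : ℕ := p.2.1.length

/-- The ∗-product (concatenation at a shared middle vertex) on coefficient functions. -/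
def mulFun {S K : Type*} [CommRing K] (f g : PIdx S → K) : PIdx S → K :=
  fun p => ∑ k : Fin p.2.1.length,
    f (p.1, p.2.1.take k, p.2.1.get k) * g (p.2.1.get k, p.2.1.drop (k + 1), p.2.2)

/-- The degree completion `P̂(S)` of the path algebra: the product over all `d ≥ 0` of
the free `K`-modules with basis the paths of degree `d` (coefficient functions with
finitely many nonzero values in each degree). -/
structure PHat (S K : Type*) [CommRing K] where
  toFun : PIdx S → K
  finite : ∀ d : ℕ, {p : PIdx S | pdeg p = d ∧ toFun p ≠ 0}.Finite

namespace PHat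

variable {S K : Type*} [CommRing K]

def add (f g : PHat S K) : PHat S K :=
  ⟨fun p => f.toFun p + g.toFun p, fun d => by
    refine ((f.finite d).union (g.finite d)).subset fun p hp => ?_
    obtain ⟨h1, h2⟩ := hp
    by_cases h : f.toFun p = 0
    · exact Or.inr ⟨h1, fun h' => h2 (by show f.toFun p + g.toFun p = 0; simp [h, h'])⟩
    · exact Or.inl ⟨h1, h⟩⟩

def smul (c : K) (f : PHat S K) : PHat S K :=
  ⟨fun p => c * f.toFun p, fun d => by
    refine (f.finite d).subset fun p hp => ?_
    exact ⟨hp.1, fun h => hp.2 (by show c * f.toFun p = 0; simp [h])⟩⟩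

/-- The ∗-product of `P̂(S)`. -/
def mul (f g : PHat S K) : PHat S K :=
  ⟨mulFun f.toFun g.toFun, fun d => by
    refine Set.Finite.subset (Set.Finite.image
        (f := fun q : PIdx S × PIdx S => (q.1.1, q.1.2.1 ++ q.1.2.2 :: q.2.2.1, q.2.2.2))
        (Set.Finite.biUnion (Finset.range d).finite_toSet
          (fun k _ => Set.Finite.prod (f.finite k) (g.finite (d - 1 - k)))))
      fun p hp => ?_
    obtain ⟨hd, hne⟩ := hp
    obtain ⟨k, -, hk⟩ := Finset.exists_ne_zero_of_sum_ne_zero hne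
    have hkd : (k : ℕ) < d := by have := k.isLt; simp only [pdeg] at hd; omega
    have hsplit : p.2.1.take k ++ p.2.1.get k :: p.2.1.drop (k + 1) = p.2.1 := by
      rw [List.get_eq_getElem, List.getElem_cons_drop, List.take_append_drop]
    refine (Set.mem_image _ _ _).mpr
      ⟨((p.1, p.2.1.take k, p.2.1.get k), (p.2.1.get k, p.2.1.drop (k + 1), p.2.2)), ?_, ?_⟩
    · refine Set.mem_biUnion (by simpa using hkd : (k : ℕ) ∈ (↑(Finset.range d) : Set ℕ)) ?_
      refine Set.mem_prod.mpr ⟨⟨?_, left_ne_zero_of_mul hk⟩, ⟨?_, right_ne_zero_of_mul hk⟩⟩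
      · show (p.2.1.take k).length = (k : ℕ)
        simp [List.length_take]
      · show (p.2.1.drop (k + 1)).length = d - 1 - (k : ℕ)
        simp only [pdeg] at hd
        simp [List.length_drop]; omega
    · show (p.1, p.2.1.take k ++ p.2.1.get k :: p.2.1.drop (k + 1), p.2.2) = p
      rw [hsplit]⟩

/-- The basis element `p_{a,b}` (degree-0 path from `a` to `b`). -/
noncomputable def delta (a b : S) : PHat S K :=
  ⟨fun p => if p = (a, ([] : List S), b) then 1 else 0, fun _ => by
    refine (Set.finite_singleton ((a, ([] : List S), b) : PIdx S)).subset fun p hp => ?_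
    by_cases h : p = (a, ([] : List S), b)
    · exact h
    · exact absurd (by show (if p = (a, ([] : List S), b) then (1:K) else 0) = 0; simp [h]) hp.2⟩

end PHat

/-- An admissible automorphism of `P̂(S)`: a `K`-algebra automorphism of `(P̂(S), ∗)`
preserving the decreasing filtration by degree, preserving each component `P̂(S)_{i,j}`,
and inducing the identity on `P̂₊(S)/P̂₊(S)²` (i.e. in degree 0). -/
structure AdmAut (S K : Type*) [CommRing K] where
  toFun : PHat S K → PHat S K
  bijective : Function.Bijective toFun
  map_add : ∀ f g : PHat S K, toFun (f.add g) = (toFun f).add (toFun g)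
  map_smul : ∀ (c : K) (f : PHat S K), toFun (f.smul c) = (toFun f).smul c
  map_mul : ∀ f g : PHat S K, toFun (f.mul g) = (toFun f).mul (toFun g)
  filtration : ∀ (d : ℕ) (f : PHat S K), (∀ p, pdeg p < d → f.toFun p = 0) →
    ∀ p, pdeg p < d → (toFun f).toFun p = 0
  component : ∀ (i j : S) (f : PHat S K), (∀ p, f.toFun p ≠ 0 → p.1 = i ∧ p.2.2 = j) →
    ∀ p, (toFun f).toFun p ≠ 0 → p.1 = i ∧ p.2.2 = j
  degree_zero : ∀ (f : PHat S K) (a b : S), (toFun f).toFun (a, ([] : List S), b) = f.toFun (a, ([] : List S), b)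

/-- The coefficient family of an admissible automorphism:
`c_F(a; s₁, …, s_m; b)` is the coefficient of `p_{a, s₁, …, s_m, b}` in `F(p_{a,b})`. -/
noncomputable def coeffOf {S K : Type*} [CommRing K] (F : AdmAut S K) :
    S → {l : List S // l ≠ []} → S → K :=
  fun a l b => (F.toFun (PHat.delta a b)).toFun (a, l.1, b)

section Aux
variable {S K : Type*} [CommRing K]

-- Ef definition test
noncomputable def Ef (cF : S → List S → S → K) : S → List S → List S → S → List S → K
  | a, u, l, b, [] => if l = [] then cF a u b else 0
  | a, u, [], b, x :: mid => Ef cF a (u ++ [x]) [] b mid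
  | a, u, c :: l, b, x :: mid =>
      (if x = c then cF a u c * Ef cF c [] l b mid else 0) + Ef cF a (u ++ [x]) (c :: l) b mid

theorem Ef_nil_l (cF : S → List S → S → K) :
    ∀ (mid u : List S) (a b : S), Ef cF a u [] b mid = cF a (u ++ mid) b := by
  intro mid
  induction mid with
  | nil => intro u a b; simp [Ef]
  | cons x mid ih => intro u a b; rw [show Ef cF a u [] b (x :: mid) = Ef cF a (u ++ [x]) [] b mid from rfl, ih]; simp

theorem Ef_cons (cF : S → List S → S → K) :
    ∀ (mid u : List S) (a c b : S) (l : List S),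
      Ef cF a u (c :: l) b mid =
        ∑ k : Fin mid.length,
          if mid.get k = c then cF a (u ++ mid.take k) c * Ef cF c [] l b (mid.drop (k + 1)) else 0 := by
  intro mid
  induction mid with
  | nil => intro u a c b l; simp [Ef]
  | cons x mid ih =>
    intro u a c b l
    rw [show Ef cF a u (c :: l) b (x :: mid) =
      (if x = c then cF a u c * Ef cF c [] l b mid else 0) + Ef cF a (u ++ [x]) (c :: l) b mid from rfl]
    simp only [List.length_cons]
    rw [Fin.sum_univ_succ, ih (u ++ [x])]
    simp [List.append_assoc]

theorem Ef_not_sublist (cF : S → List S → S → K) :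
    ∀ (mid l u : List S) (a b : S), ¬ l.Sublist mid → Ef cF a u l b mid = 0 := by
  intro mid
  induction mid with
  | nil =>
    intro l u a b h
    cases l with
    | nil => exact absurd (List.nil_sublist _) h
    | cons c l => simp [Ef]
  | cons x mid ih =>
    intro l u a b h
    cases l with
    | nil => exact absurd (List.nil_sublist _) h
    | cons c l =>
      rw [show Ef cF a u (c :: l) b (x :: mid) =
        (if x = c then cF a u c * Ef cF c [] l b mid else 0) + Ef cF a (u ++ [x]) (c :: l) b mid from rfl]
      have h2 : Ef cF a (u ++ [x]) (c :: l) b mid = 0 :=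
        ih _ _ _ _ fun hs => h (hs.cons x)
      by_cases hxc : x = c
      · subst hxc
        have h1 : Ef cF x [] l b mid = 0 := ih _ _ _ _ fun hs => h (hs.cons₂ x)
        simp [h1, h2]
      · simp [hxc, h2]

theorem PHat.ext' {f g : PHat S K} (h : f.toFun = g.toFun) : f = g := by
  cases f; cases g; simp_all

noncomputable def pathEl (p : PIdx S) : PHat S K :=
  ⟨fun q => if q = p then 1 else 0, fun _ => by
    refine (Set.finite_singleton p).subset fun q hq => ?_
    by_cases h : q = p
    · exact h
    · exact absurd (by show (if q = p then (1:K) else 0) = 0; simp [h]) hq.2⟩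

noncomputable def zeroP : PHat S K :=
  ⟨fun _ => 0, fun _ => Set.finite_empty.subset fun p hp => hp.2 rfl⟩

noncomputable def sumP : List (PIdx S × K) → PHat S K
  | [] => zeroP
  | pc :: L => (PHat.smul pc.2 (pathEl pc.1)).add (sumP L)

theorem sumP_toFun (L : List (PIdx S × K)) (q : PIdx S) :
    (sumP L).toFun q = (L.map fun pc => pc.2 * (if q = pc.1 then 1 else 0)).sum := by
  induction L with
  | nil => simp [sumP, zeroP]
  | cons pc L ih => simp [sumP, PHat.add, PHat.smul, pathEl, ih]

variable {F : AdmAut S K}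

theorem F_zeroP (F : AdmAut S K) : (F.toFun (zeroP : PHat S K)).toFun = fun _ => (0 : K) := by
  have h : (zeroP : PHat S K) = PHat.smul 0 zeroP := PHat.ext' (by funext p; simp [zeroP, PHat.smul])
  funext p
  rw [h, F.map_smul]
  simp [PHat.smul]

theorem F_sumP (F : AdmAut S K) (L : List (PIdx S × K)) (q : PIdx S) :
    (F.toFun (sumP L)).toFun q = (L.map fun pc => pc.2 * (F.toFun (pathEl pc.1)).toFun q).sum := by
  induction L with
  | nil => simp [sumP, F_zeroP]
  | cons pc L ih =>
    rw [show sumP (pc :: L) = (PHat.smul pc.2 (pathEl pc.1)).add (sumP L) from rfl,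
      F.map_add, F.map_smul]
    simp [PHat.add, PHat.smul, ih]

theorem delta_mul_pathEl (x c y : S) (l : List S) :
    (PHat.delta x c : PHat S K).mul (pathEl ((c, l, y) : PIdx S)) = pathEl ((x, c :: l, y) : PIdx S) := by
  apply PHat.ext'
  funext q
  obtain ⟨q1, qm, q2⟩ := q
  show mulFun _ _ (q1, qm, q2) = _
  by_cases hq : ((q1, qm, q2) : PIdx S) = (x, c :: l, y)
  · rw [hq]
    show mulFun _ _ (x, c :: l, y) = _
    rw [show (pathEl ((x, c :: l, y) : PIdx S) : PHat S K).toFun (x, c :: l, y) = 1 by simp [pathEl]]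
    unfold mulFun
    simp only [List.length_cons]
    rw [Fin.sum_univ_succ]
    simp [PHat.delta, pathEl]
  · rw [show (pathEl ((x, c :: l, y) : PIdx S) : PHat S K).toFun (q1, qm, q2) = 0 by simp [pathEl, hq]]
    apply Finset.sum_eq_zero
    intro k _
    rw [show ((PHat.delta x c : PHat S K)).toFun (q1, qm.take k, qm.get k) =
        (if ((q1, qm.take (k : ℕ), qm.get k) : PIdx S) = (x, [], c) then (1:K) else 0) from rfl,
      show ((pathEl ((c, l, y) : PIdx S) : PHat S K)).toFun (qm.get k, qm.drop (k + 1), q2) =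
        (if ((qm.get k, qm.drop ((k : ℕ) + 1), q2) : PIdx S) = (c, l, y) then (1:K) else 0) from rfl]
    by_cases h1 : ((q1, qm.take (k : ℕ), qm.get k) : PIdx S) = (x, [], c)
    · by_cases h2 : ((qm.get k, qm.drop ((k : ℕ) + 1), q2) : PIdx S) = (c, l, y)
      · exfalso
        apply hq
        obtain ⟨e1, e2, e3⟩ : q1 = x ∧ qm.take (k : ℕ) = [] ∧ qm.get k = c := by
          simpa [Prod.ext_iff] using h1
        obtain ⟨f1, f2, f3⟩ : qm.get k = c ∧ qm.drop ((k : ℕ) + 1) = l ∧ q2 = y := by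
          simpa [Prod.ext_iff] using h2
        have hsplit : qm.take (k : ℕ) ++ qm.get k :: qm.drop ((k : ℕ) + 1) = qm := by
          rw [List.get_eq_getElem, List.getElem_cons_drop, List.take_append_drop]
        have : qm = c :: l := by rw [← hsplit, e2, e3, f2]; rfl
        rw [e1, this, f3]
      · rw [if_neg h2, mul_zero]
    · rw [if_neg h1, zero_mul]

theorem coeffF (F : AdmAut S K) (cF : S → List S → S → K)
    (hcF : ∀ a b : S, ∀ p : PIdx S,
      (F.toFun (PHat.delta a b)).toFun p = if p.1 = a ∧ p.2.2 = b then cF a p.2.1 b else 0) :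
    ∀ (l : List S) (x y : S) (p : PIdx S),
      (F.toFun (pathEl ((x, l, y) : PIdx S))).toFun p =
        if p.1 = x ∧ p.2.2 = y then Ef cF x [] l y p.2.1 else 0 := by
  intro l
  induction l with
  | nil =>
    intro x y p
    have hdel : (pathEl ((x, [], y) : PIdx S) : PHat S K) = PHat.delta x y := PHat.ext' rfl
    rw [hdel, hcF]
    by_cases h : p.1 = x ∧ p.2.2 = y
    · rw [if_pos h, if_pos h, Ef_nil_l]; rfl
    · rw [if_neg h, if_neg h]
  | cons c l ih =>
    intro x y p
    rw [← delta_mul_pathEl, F.map_mul]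
    obtain ⟨p1, pm, p2⟩ := p
    show mulFun _ _ (p1, pm, p2) = _
    unfold mulFun
    by_cases h1 : p1 = x
    · by_cases h2 : p2 = y
      · subst h1; subst h2
        rw [if_pos ⟨rfl, rfl⟩, Ef_cons]
        apply Finset.sum_congr rfl
        intro k _
        rw [hcF, ih]
        by_cases hc : pm.get k = c
        · rw [if_pos ⟨rfl, hc⟩, if_pos ⟨hc, rfl⟩, if_pos hc]
          show cF p1 (pm.take (k:ℕ)) c * Ef cF c [] l p2 (pm.drop ((k:ℕ)+1)) = _
          rw [List.nil_append]
        · rw [if_neg (by tauto), zero_mul, if_neg hc]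
      · rw [if_neg (by tauto)]
        apply Finset.sum_eq_zero
        intro k _
        rw [ih, if_neg (by tauto), mul_zero]
    · rw [if_neg (by tauto)]
      apply Finset.sum_eq_zero
      intro k _
      rw [hcF, if_neg (by tauto), zero_mul]

theorem blockProd_cons (f : S → List S → S → K) (a c b : S) (bl : List S)
    (bls : List (List S)) (cs : List S) :
    blockProd f a (bl :: bls) (c :: cs) b = f a bl c * blockProd f c bls cs b := by
  cases bls <;> rfl

theorem marks_ne_nil {α : Type*} : ∀ (l : List α), ∀ q ∈ marks l, q.2 ≠ [] := by
  intro l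
  induction l with
  | nil => intro q hq; simp [marks] at hq; subst hq; simp
  | cons x l ih =>
    intro q hq
    simp only [marks, List.mem_append, List.mem_map] at hq
    rcases hq with ⟨p, _, rfl⟩ | ⟨p, _, rfl⟩ <;> simp

theorem marks_sum (cF : S → List S → S → K) (b : S) :
    ∀ (mid : List S) (a : S) (u : List S) (h : List S → K),
      ((marks mid).map fun q => h q.1 * blockProd cF a ((u ++ q.2.headI) :: q.2.tail) q.1 b).sum
        = ∑ l ∈ mid.sublists.toFinset, h l * Ef cF a u l b mid := by
  intro mid
  induction mid with
  | nil => intro a u h; simp [marks, blockProd, Ef]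
  | cons x mid ih =>
    intro a u h
    have hmem : ∀ l : List S, l ∈ mid.sublists.toFinset ↔ l.Sublist mid := by
      intro l; rw [List.mem_toFinset, List.mem_sublists]
    have hmem2 : ∀ l : List S, l ∈ (x :: mid).sublists.toFinset ↔ l.Sublist (x :: mid) := by
      intro l; rw [List.mem_toFinset, List.mem_sublists]
    have hsub : mid.sublists.toFinset ⊆ (x :: mid).sublists.toFinset := by
      intro l hl; rw [hmem2]; exact ((hmem l).mp hl).cons x
    set β : List S → K := fun l =>
      l.casesOn 0 (fun c l' => if x = c then cF a u c * Ef cF c [] l' b mid else 0) with hβ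
    have hEfsplit : ∀ l : List S, Ef cF a u l b (x :: mid) = β l + Ef cF a (u ++ [x]) l b mid := by
      intro l
      cases l with
      | nil => rw [show β [] = (0 : K) from rfl, zero_add]; rfl
      | cons c l' =>
        rw [show Ef cF a u (c :: l') b (x :: mid) =
          (if x = c then cF a u c * Ef cF c [] l' b mid else 0)
            + Ef cF a (u ++ [x]) (c :: l') b mid from rfl]
    rw [show marks (x :: mid) = ((marks mid).map fun p => (x :: p.1, [] :: p.2)) ++
        ((marks mid).map fun p => (p.1, (x :: p.2.headI) :: p.2.tail)) from rfl]
    rw [List.map_append, List.sum_append, List.map_map, List.map_map]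
    -- rewrite the marked part
    have hmk : ((marks mid).map ((fun q : List S × List (List S) =>
          h q.1 * blockProd cF a ((u ++ q.2.headI) :: q.2.tail) q.1 b) ∘
          fun p => (x :: p.1, [] :: p.2))).sum
        = ∑ l ∈ mid.sublists.toFinset,
            (cF a u x * h (x :: l)) * Ef cF x [] l b mid := by
      rw [← ih x [] (fun l => cF a u x * h (x :: l))]
      congr 1
      apply List.map_congr_left
      intro p hp
      have hp2 : p.2.headI :: p.2.tail = p.2 := by
        cases hpp : p.2 with
        | nil => exact absurd hpp (marks_ne_nil mid p hp)
        | cons b0 bs => rfl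
      show h (x :: p.1) * blockProd cF a ((u ++ ([] :: p.2).headI) :: ([] :: p.2).tail) (x :: p.1) b = _
      rw [show ([] :: p.2).headI = ([] : List S) from rfl, show ([] :: p.2).tail = p.2 from rfl]
      rw [blockProd_cons]
      rw [show ([] : List S) ++ p.2.headI = p.2.headI from rfl, hp2, List.append_nil]
      ring
    rw [hmk]
    -- rewrite the unmarked part
    have hum : ((marks mid).map ((fun q : List S × List (List S) =>
          h q.1 * blockProd cF a ((u ++ q.2.headI) :: q.2.tail) q.1 b) ∘
          fun p => (p.1, (x :: p.2.headI) :: p.2.tail))).sum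
        = ∑ l ∈ mid.sublists.toFinset, h l * Ef cF a (u ++ [x]) l b mid := by
      rw [← ih a (u ++ [x]) h]
      congr 1
      apply List.map_congr_left
      intro p hp
      show h p.1 * blockProd cF a ((u ++ ((x :: p.2.headI) :: p.2.tail).headI)
          :: ((x :: p.2.headI) :: p.2.tail).tail) p.1 b = _
      rw [show ((x :: p.2.headI) :: p.2.tail).headI = x :: p.2.headI from rfl,
        show ((x :: p.2.headI) :: p.2.tail).tail = p.2.tail from rfl]
      rw [show u ++ x :: p.2.headI = (u ++ [x]) ++ p.2.headI by simp]
    rw [hum]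
    -- rewrite the RHS
    conv_rhs => rw [Finset.sum_congr rfl fun l _ => by rw [hEfsplit l, mul_add], Finset.sum_add_distrib]
    congr 1
    · -- marked part equals sum of β-terms
      have e1 : ∀ l ∈ mid.sublists.toFinset,
          (cF a u x * h (x :: l)) * Ef cF x [] l b mid = h (x :: l) * β (x :: l) := by
        intro l _
        rw [show β (x :: l) = if x = x then cF a u x * Ef cF x [] l b mid else 0 from rfl,
          if_pos rfl]
        ring
      rw [Finset.sum_congr rfl e1]
      rw [show (∑ l ∈ mid.sublists.toFinset, h (x :: l) * β (x :: l))
          = ∑ l ∈ mid.sublists.toFinset.image (x :: ·), h l * β l by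
        rw [Finset.sum_image (fun l1 _ l2 _ e => by injection e)]]
      apply Finset.sum_subset
      · intro l hl
        obtain ⟨l', hl', rfl⟩ := Finset.mem_image.mp hl
        exact (hmem2 _).mpr (((hmem _).mp hl').cons₂ x)
      · intro l hl hlim
        cases l with
        | nil => rw [show β [] = (0 : K) from rfl, mul_zero]
        | cons c l' =>
          rw [show β (c :: l') = if x = c then cF a u c * Ef cF c [] l' b mid else 0 from rfl]
          by_cases hxc : x = c
          · subst hxc
            have hns : ¬ l'.Sublist mid := fun hs =>
              hlim (Finset.mem_image.mpr ⟨l', (hmem _).mpr hs, rfl⟩)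
            rw [Ef_not_sublist cF mid l' [] x b hns]
            simp
          · rw [if_neg hxc, mul_zero]
    · -- unmarked part
      apply Finset.sum_subset hsub
      intro l hl hln
      rw [Ef_not_sublist cF mid l (u ++ [x]) a b fun hs => hln ((hmem l).mpr hs), mul_zero]

end Aux

theorem admAut_comp_coeff (S K : Type*) [Field K]
    (F G H : AdmAut S K)
    -- H is the composite F ∘ G
    (hH : ∀ f : PHat S K, H.toFun f = F.toFun (G.toFun f))
    -- c_F and c_G are the coefficient families of F and G, extended by c(a; ; b) = 1
    (cF cG : S → List S → S → K)
    (hcF1 : ∀ a b : S, cF a [] b = 1) (hcG1 : ∀ a b : S, cG a [] b = 1)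
    (hcF : ∀ a b : S, ∀ p : PIdx S,
      (F.toFun (PHat.delta a b)).toFun p = if p.1 = a ∧ p.2.2 = b then cF a p.2.1 b else 0)
    (hcG : ∀ a b : S, ∀ p : PIdx S,
      (G.toFun (PHat.delta a b)).toFun p = if p.1 = a ∧ p.2.2 = b then cG a p.2.1 b else 0) :
    -- the coefficient family of F ∘ G is given by Goncharov's composition formula
    ∀ (a b : S) (mid : List S), mid ≠ [] →
      (H.toFun (PHat.delta a b)).toFun (a, mid, b) =
        ((marks mid).map fun q => cG a q.1 b * blockProd cF a q.2 q.1 b).sum := by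
  intro a b mid _hm
  classical
  set m := mid.length with hm
  set f : PHat S K := G.toFun (PHat.delta a b) with hf
  have hfin : {p : PIdx S | pdeg p ≤ m ∧ f.toFun p ≠ 0}.Finite := by
    refine ((Set.Finite.biUnion (Finset.range (m+1)).finite_toSet
      (fun d _ => f.finite d))).subset ?_
    intro p hp
    exact Set.mem_biUnion
      (show (pdeg p) ∈ (↑(Finset.range (m+1)) : Set ℕ) by simp [Nat.lt_succ_iff, hp.1])
      ⟨rfl, hp.2⟩
  set Λ := hfin.toFinset with hΛ
  have hΛmem : ∀ p : PIdx S, p ∈ Λ ↔ pdeg p ≤ m ∧ f.toFun p ≠ 0 := fun p =>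
    Set.Finite.mem_toFinset hfin
  set T : PHat S K := sumP (Λ.toList.map fun p => (p, f.toFun p)) with hT
  set R : PHat S K := ⟨fun p => if pdeg p ≤ m then 0 else f.toFun p, by
      intro d
      refine (f.finite d).subset fun p hp => ⟨hp.1, fun h0 => hp.2 (by simp [h0])⟩⟩ with hR
  have hRto : ∀ q : PIdx S, R.toFun q = if pdeg q ≤ m then 0 else f.toFun q := fun q => rfl
  have hTto : ∀ q : PIdx S, T.toFun q = if pdeg q ≤ m ∧ f.toFun q ≠ 0 then f.toFun q else 0 := by
    intro q
    rw [hT, sumP_toFun, List.map_map]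
    rw [show ((fun (pc : PIdx S × K) => pc.2 * (if q = pc.1 then (1:K) else 0)) ∘
        (fun p => (p, f.toFun p))) = fun p => if q = p then f.toFun p else 0 by
      funext p; by_cases hqp : q = p <;> simp [hqp]]
    rw [Finset.sum_map_toList, Finset.sum_ite_eq]
    exact if_congr (hΛmem q) rfl rfl
  have hdecomp : f = T.add R := by
    apply PHat.ext'
    funext q
    show f.toFun q = T.toFun q + R.toFun q
    rw [hTto q, hRto q]
    by_cases h1 : pdeg q ≤ m
    · by_cases h2 : f.toFun q = 0 <;> simp [h1, h2]
    · simp [h1]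
  have key : (H.toFun (PHat.delta a b)).toFun (a, mid, b)
      = ∑ p ∈ Λ, f.toFun p *
          (if a = p.1 ∧ b = p.2.2 then Ef cF p.1 [] p.2.1 p.2.2 mid else 0) := by
    rw [hH, ← hf]
    conv_lhs => rw [hdecomp]
    rw [F.map_add]
    show (F.toFun T).toFun (a, mid, b) + (F.toFun R).toFun (a, mid, b) = _
    have hRzero : (F.toFun R).toFun (a, mid, b) = 0 := by
      refine F.filtration (m+1) R (fun p hp => ?_) (a, mid, b) ?_
      · rw [hRto]; exact if_pos (Nat.lt_succ_iff.mp hp)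
      · show pdeg (a, mid, b) < m + 1
        simp [pdeg, hm]
    rw [hRzero, add_zero, hT, F_sumP, List.map_map]
    rw [show ((fun (pc : PIdx S × K) => pc.2 * (F.toFun (pathEl pc.1)).toFun (a, mid, b)) ∘
        (fun p => (p, f.toFun p)))
        = fun p => f.toFun p * (F.toFun (pathEl p)).toFun (a, mid, b) from rfl]
    rw [Finset.sum_map_toList]
    apply Finset.sum_congr rfl
    intro p _
    congr 1
    exact coeffF F cF hcF p.2.1 p.1 p.2.2 (a, mid, b)
  rw [key]
  have hbij : (∑ p ∈ Λ, f.toFun p *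
        (if a = p.1 ∧ b = p.2.2 then Ef cF p.1 [] p.2.1 p.2.2 mid else 0))
      = ∑ l ∈ mid.sublists.toFinset, cG a l b * Ef cF a [] l b mid := by
    refine Finset.sum_bij_ne_zero (fun p _ _ => p.2.1) ?_ ?_ ?_ ?_
    · intro p hp hne
      rw [List.mem_toFinset, List.mem_sublists]
      by_contra hns
      have h0 : (if a = p.1 ∧ b = p.2.2 then Ef cF p.1 [] p.2.1 p.2.2 mid else 0) = 0 := by
        by_cases hc : a = p.1 ∧ b = p.2.2
        · rw [if_pos hc, Ef_not_sublist cF mid p.2.1 [] p.1 p.2.2 hns]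
        · exact if_neg hc
      exact hne (by rw [h0, mul_zero])
    · intro p1 hp1 hne1 p2 hp2 hne2 e
      have c1 : a = p1.1 ∧ b = p1.2.2 := by
        by_contra hc; exact hne1 (by rw [if_neg hc, mul_zero])
      have c2 : a = p2.1 ∧ b = p2.2.2 := by
        by_contra hc; exact hne2 (by rw [if_neg hc, mul_zero])
      have e' : p1.2.1 = p2.2.1 := e
      calc p1 = (p1.1, p1.2.1, p1.2.2) := rfl
        _ = (p2.1, p2.2.1, p2.2.2) := by rw [← c1.1, ← c1.2, ← c2.1, ← c2.2, e']
        _ = p2 := rfl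
    · intro l hl hgne
      have hls : l.Sublist mid := by rwa [List.mem_toFinset, List.mem_sublists] at hl
      have hgG : cG a l b ≠ 0 := left_ne_zero_of_mul hgne
      have hfp : f.toFun ((a, l, b) : PIdx S) = cG a l b := by
        rw [hf, hcG]; exact if_pos ⟨rfl, rfl⟩
      refine ⟨(a, l, b), ?_, ?_, rfl⟩
      · rw [hΛmem]
        exact ⟨by simpa [pdeg, hm] using hls.length_le, by rw [hfp]; exact hgG⟩
      · rw [hfp, if_pos ⟨rfl, rfl⟩]
        exact hgne
    · intro p hp hne
      have c1 : a = p.1 ∧ b = p.2.2 := by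
        by_contra hc; exact hne (by rw [if_neg hc, mul_zero])
      have hfp : f.toFun p = cG a p.2.1 b := by
        rw [hf, hcG]; exact if_pos ⟨c1.1.symm, c1.2.symm⟩
      rw [hfp, if_pos c1, ← c1.1, ← c1.2]
  rw [hbij, ← marks_sum cF b mid a [] fun l => cG a l b]
  congr 1
  apply List.map_congr_left
  intro q hq
  have hq2 : q.2.headI :: q.2.tail = q.2 := by
    cases hqq : q.2 with
    | nil => exact absurd hqq (marks_ne_nil mid q hq)
    | cons b0 bs => rfl
  rw [List.nil_append, hq2]
end

section
/- Let F be an admissible automorphism of P̂(S) with coefficient family c_F (extended by c_F(a; ; b) := 1). Then: (1) F satisfies F(p_{a,x}) ∘ F(p_{x,b}) = F(p_{a,b}) for all a, x, b ∈ S if and only if c_F satisfies the path composition formula, i.e. c_F(s_0; s_1, ..., s_m; s_{m+1}) = Σ_{k=0}^{m} c_F(s_0; s_1, ..., s_k; x) · c_F(x; s_{k+1}, ..., s_m; s_{m+1}) for all m ≥ 1, all s_i and all x ∈ S; (2) F satisfies F(p_{i,i}) = p_{i,i} for all i ∈ S if and only if c_F(a; s_1, ..., s_m; a) = 0 for all m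 ≥ 1 and all a, s_i ∈ S; (3) F satisfies δ(F(p_{a,b})) = F(p_{a,b}) ⊗ F(p_{a,b}) for all a, b ∈ S if and only if c_F satisfies the shuffle product formula, i.e. c_F(a; s_1, ..., s_m; b) · c_F(a; s_{m+1}, ..., s_{m+n}; b) = Σ_{σ ∈ Σ_{m,n}} c_F(a; s_{σ(1)}, ..., s_{σ(m+n)}; b), where Σ_{m,n} is the set of shuffles of {1,...,m} and {m+1,...,m+n}. -/
open scoped Classical

/-- The ∘-product (composition of paths) on coefficient functions:
`p_{a,X,b} ∘ p_{c,Y,d} = p_{a,X,Y,d}` if `b = c` and `0` otherwise. -/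
noncomputable def circFun {S K : Type*} [CommRing K] (f g : PIdx S → K) : PIdx S → K :=
  fun p => ∑ k ∈ Finset.range (p.2.1.length + 1),
    ∑ᶠ x : S, f (p.1, p.2.1.take k, x) * g (x, p.2.1.drop k, p.2.2)

theorem PHat.toFun_injective {S K : Type*} [CommRing K] :
    Function.Injective (PHat.toFun : PHat S K → (PIdx S → K)) := by
  rintro ⟨f, hf⟩ ⟨g, hg⟩ h
  dsimp at h
  subst h
  rfl

theorem admAut_circ_unit_delta_iff (S K : Type*) [Field K]
    (F : AdmAut S K)
    (cF : S → List S → S → K)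
    (hcF1 : ∀ a b : S, cF a [] b = 1)
    (hcF : ∀ a b : S, ∀ p : PIdx S,
      (F.toFun (PHat.delta a b)).toFun p = if p.1 = a ∧ p.2.2 = b then cF a p.2.1 b else 0) :
    -- (1) F commutes with the ∘-product on the p_{a,b} iff c_F satisfies path composition
    ((∀ a x b : S,
        circFun (F.toFun (PHat.delta a x)).toFun (F.toFun (PHat.delta x b)).toFun =
          (F.toFun (PHat.delta a b)).toFun) ↔
      (∀ (s₀ s₁ x : S) (mid : List S), mid ≠ [] →
        cF s₀ mid s₁ = ∑ k ∈ Finset.range (mid.length + 1),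
          cF s₀ (mid.take k) x * cF x (mid.drop k) s₁)) ∧
    -- (2) F fixes the ∘-units p_{i,i} iff c_F(a; s₁,…,s_m; a) = 0 for m ≥ 1
    ((∀ i : S, F.toFun (PHat.delta i i) = PHat.delta i i) ↔
      (∀ (a : S) (mid : List S), mid ≠ [] → cF a mid a = 0)) ∧
    -- (3) δ(F(p_{a,b})) = F(p_{a,b}) ⊗ F(p_{a,b}) iff c_F satisfies the shuffle formula
    ((∀ (a b : S) (p q : PIdx S),
        (if p.1 = q.1 ∧ p.2.2 = q.2.2 then
            ((shuffles p.2.1 q.2.1).map fun w =>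
              (F.toFun (PHat.delta a b)).toFun (p.1, w, p.2.2)).sum
          else 0) =
          (F.toFun (PHat.delta a b)).toFun p * (F.toFun (PHat.delta a b)).toFun q) ↔
      (∀ (a b : S) (l₁ l₂ : List S),
        cF a l₁ b * cF a l₂ b = ((shuffles l₁ l₂).map fun w => cF a w b).sum)) := by
  have key : ∀ a x b : S, ∀ p : PIdx S,
      circFun (F.toFun (PHat.delta a x)).toFun (F.toFun (PHat.delta x b)).toFun p =
        if p.1 = a ∧ p.2.2 = b then
          ∑ k ∈ Finset.range (p.2.1.length + 1),
            cF a (p.2.1.take k) x * cF x (p.2.1.drop k) b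
        else 0 := by
    intro a x b p
    unfold circFun
    by_cases h : p.1 = a ∧ p.2.2 = b
    · rw [if_pos h]
      refine Finset.sum_congr rfl fun k _ => ?_
      rw [finsum_eq_single _ x ?_]
      · rw [hcF, hcF]; simp [h.1, h.2]
      · intro y hy
        rw [hcF, hcF]; simp [hy]
    · rw [if_neg h]
      refine Finset.sum_eq_zero fun k _ => ?_
      rw [finsum_eq_single _ x ?_]
      · rw [hcF, hcF]
        rcases not_and_or.mp h with h1 | h1 <;> simp [h1]
      · intro y hy
        rw [hcF, hcF]; simp [hy]
  refine ⟨⟨fun H s₀ s₁ x mid hm => ?_, fun H a x b => ?_⟩,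
    ⟨fun H a mid hm => ?_, fun H i => ?_⟩,
    ⟨fun H a b l₁ l₂ => ?_, fun H a b p q => ?_⟩⟩
  · have h1 := congrFun (H s₀ x s₁) ((s₀, mid, s₁) : PIdx S)
    rw [key, hcF] at h1
    simpa using h1.symm
  · funext p
    rw [key, hcF]
    by_cases h : p.1 = a ∧ p.2.2 = b
    · rw [if_pos h, if_pos h]
      by_cases hmid : p.2.1 = []
      · simp [hmid, hcF1]
      · exact (H a b x p.2.1 hmid).symm
    · rw [if_neg h, if_neg h]
  · have h2 := congrFun (congrArg PHat.toFun (H a)) ((a, mid, a) : PIdx S)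
    rw [hcF] at h2
    simpa [PHat.delta, hm] using h2
  · have h3 : (F.toFun (PHat.delta i i)).toFun = (PHat.delta i i : PHat S K).toFun := by
      funext p
      rw [hcF]
      show _ = if p = (i, ([] : List S), i) then (1:K) else 0
      obtain ⟨p1, pm, p2⟩ := p
      by_cases h : p1 = i ∧ p2 = i
      · obtain ⟨rfl, rfl⟩ := h
        by_cases hmid : pm = []
        · subst hmid; simp [hcF1]
        · simp [hmid, H _ pm hmid]
      · rcases not_and_or.mp h with h1 | h1 <;> simp [h1, Prod.ext_iff]
    exact PHat.toFun_injective h3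
  · have h4 := H a b ((a, l₁, b) : PIdx S) ((a, l₂, b) : PIdx S)
    rw [if_pos ⟨rfl, rfl⟩] at h4
    simp only [hcF] at h4
    simpa using h4.symm
  · rw [hcF a b p, hcF a b q]
    by_cases hp : p.1 = a ∧ p.2.2 = b <;> by_cases hq : q.1 = a ∧ q.2.2 = b
    · rw [if_pos hp, if_pos hq, if_pos ⟨hp.1.trans hq.1.symm, hp.2.trans hq.2.symm⟩]
      simp only [hcF, hp.1, hp.2, and_self, if_true]
      exact (H a b p.2.1 q.2.1).symm
    · rw [if_neg hq, mul_zero]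
      split
      · rename_i cc
        exact absurd ⟨cc.1.symm.trans hp.1, cc.2.symm.trans hp.2⟩ hq
      · rfl
    · rw [if_neg hp, zero_mul]
      split
      · refine Multiset.sum_eq_zero fun y hy => ?_
        obtain ⟨w, -, rfl⟩ := Multiset.mem_map.mp hy
        rw [hcF, if_neg hp]
      · rfl
    · rw [if_neg hp, zero_mul]
      split
      · refine Multiset.sum_eq_zero fun y hy => ?_
        obtain ⟨w, -, rfl⟩ := Multiset.mem_map.mp hy
        rw [hcF, if_neg hp]
      · rfl
end

section
/- Let X be a set, F(X) the free group on X, ℚ[F(X)] its group algebra over ℚ, and I ⊂ ℚ[F(X)] the augmentation ideal (the kernel of the algebra homomorphism ℚ[F(X)] → ℚ sending every group element to 1). Then the associated graded algebra ⊕_{n ≥ 0} I^n/I^{n+1} of the I-adic filtration is isomorphic, as a graded ℚ-algebra, to the tensor algebra T(V) of the free ℚ-vector space V on the set X, via the isomorphism sending, for each x ∈ X, the class of x − 1 in I/I² to the degree-one generator x ∈ V. -/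
/-!
STATEMENT 17. Let `X` be a set, `F(X)` the free group on `X`, `ℚ[F(X)]` its group
algebra and `I` the augmentation ideal. Then the associated graded algebra
`⊕_{n ≥ 0} Iⁿ/Iⁿ⁺¹` is isomorphic, as a graded ℚ-algebra, to the tensor algebra `T(V)`
of the free ℚ-vector space `V` on `X`, via the isomorphism sending the class of `x − 1`
in `I/I²` to the degree-one generator `x ∈ V`.
-/

/-- The augmentation ideal of the group algebra `ℚ[F(X)]` (the kernel of the algebra
homomorphism sending every group element to `1`), viewed as a ℚ-submodule. -/
noncomputable def augIdeal (X : Type*) : Submodule ℚ (MonoidAlgebra ℚ (FreeGroup X)) :=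
  Submodule.restrictScalars ℚ
    (RingHom.ker ((MonoidAlgebra.lift ℚ ℚ (FreeGroup X)) 1).toRingHom)

/-- `Iⁿ`, the `n`-th power of the augmentation ideal. -/
noncomputable def Ipow (X : Type*) (n : ℕ) :
    Submodule ℚ (MonoidAlgebra ℚ (FreeGroup X)) :=
  augIdeal X ^ n

/-- The `n`-th piece `Iⁿ/Iⁿ⁺¹` of the associated graded of the `I`-adic filtration. -/
noncomputable abbrev grPiece (X : Type*) (n : ℕ) :=
  (Ipow X n) ⧸ (Submodule.comap (Ipow X n).subtype (Ipow X (n + 1)))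

/-- The canonical projection `Iⁿ → Iⁿ/Iⁿ⁺¹`. -/
noncomputable def mkg (X : Type*) (n : ℕ) (x : Ipow X n) : grPiece X n :=
  Submodule.Quotient.mk x

/-- The degree-`n` graded piece of the tensor algebra `T(V)`, `V` the free ℚ-vector
space on `X`. -/
noncomputable def taPiece (X : Type*) (n : ℕ) :
    Submodule ℚ (TensorAlgebra ℚ (X →₀ ℚ)) :=
  LinearMap.range (TensorAlgebra.ι ℚ (M := X →₀ ℚ)) ^ n

/-!
The Magnus expansion `x ↦ 1 + x t` embeds `ℚ[F(X)]` into `T(V)⟦t⟧` with `n`-th coefficients in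
`T(V)ₙ`. It sends `I` into `t · T(V)⟦t⟧`, hence `Iⁿ` into `tⁿ · T(V)⟦t⟧`, so the `tⁿ`-coefficient
induces a map `Iⁿ/Iⁿ⁺¹ → T(V)ₙ`, multiplicative across degrees, sending the class of
`(x₁ - 1)⋯(xₙ - 1)` to the word `x₁ ⋯ xₙ`. The words form a basis of `T(V)ₙ`, so the map is onto.
It is injective because `gh - 1 = (g - 1) + (h - 1) + (g - 1)(h - 1)` (and its analogue for `g⁻¹`)
gives `I = span{x - 1} + I²`, so the products `(x₁ - 1)⋯(xₙ - 1)` span `Iⁿ` modulo `Iⁿ⁺¹`.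
-/

open PowerSeries

noncomputable section

namespace MonoidAlgebra
variable {k G : Type*} [CommRing k]

lemma sub_algebraMap_lift_one_mem_span [Monoid G] (a : MonoidAlgebra k G) :
    a - algebraMap k _ (lift k k G 1 a) ∈ Submodule.span k (Set.range fun g => of k G g - 1) := by
  induction a using MonoidAlgebra.induction_linear with
  | zero => simp
  | add a b ha hb =>
    convert add_mem ha hb using 1
    rw [map_add, map_add]
    abel
  | single g c =>
    have h : single g c - algebraMap k _ (lift k k G 1 (single g c)) = c • (of k G g - 1) := by
      simp [smul_sub, Algebra.algebraMap_eq_smul_one]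
    rw [h]
    exact Submodule.smul_mem _ _ (Submodule.subset_span ⟨g, rfl⟩)

lemma of_mul_sub_one [Monoid G] (g h : G) :
    of k G (g * h) - 1 = (of k G g - 1) + (of k G h - 1) + (of k G g - 1) * (of k G h - 1) := by
  rw [map_mul]
  noncomm_ring

lemma of_inv_sub_one [Group G] (g : G) :
    of k G g⁻¹ - 1 = -(of k G g - 1) - (of k G g - 1) * (of k G g⁻¹ - 1) := by
  have h : of k G g * of k G g⁻¹ = 1 := by rw [← map_mul, mul_inv_cancel, map_one]
  simp only [mul_sub, sub_mul, h, one_mul, mul_one]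
  abel

end MonoidAlgebra

namespace Submodule
variable {R A : Type*} [CommSemiring R] [Semiring A] [Algebra R A]

lemma span_range_pow {ι : Type*} (g : ι → A) (n : ℕ) :
    span R (Set.range g) ^ n =
      span R (Set.range fun f : Fin n → ι => (List.ofFn fun i => g (f i)).prod) := by
  rw [span_pow]
  congr 1
  ext a
  simp only [Set.mem_pow, Set.mem_range]
  constructor
  · rintro ⟨f, rfl⟩
    exact ⟨fun i => (f i).2.choose, by simp only [(f _).2.choose_spec]⟩
  · rintro ⟨f, rfl⟩
    exact ⟨fun i => ⟨g (f i), f i, rfl⟩, rfl⟩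

lemma pow_le_pow_sup_pow_succ {I J : Submodule R A} (hJI : J ≤ I) (hI : I ≤ J ⊔ I ^ 2) (n : ℕ) :
    I ^ n ≤ J ^ n ⊔ I ^ (n + 1) := by
  induction n with
  | zero => simp
  | succ n ih =>
    calc I ^ (n + 1) = I ^ n * I := pow_succ I n
      _ ≤ (J ^ n ⊔ I ^ (n + 1)) * I := mul_le_mul' ih le_rfl
      _ = J ^ n * I ⊔ I ^ (n + 1 + 1) := by rw [sup_mul, ← pow_succ]
      _ ≤ J ^ n * (J ⊔ I ^ 2) ⊔ I ^ (n + 1 + 1) := sup_le_sup_right (mul_le_mul' le_rfl hI) _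
      _ = J ^ (n + 1) ⊔ J ^ n * I ^ 2 ⊔ I ^ (n + 1 + 1) := by rw [mul_sup, ← pow_succ]
      _ ≤ J ^ (n + 1) ⊔ I ^ (n + 1 + 1) := by
        have h : J ^ n * I ^ 2 ≤ I ^ (n + 1 + 1) :=
          calc J ^ n * I ^ 2 ≤ I ^ n * I ^ 2 := mul_le_mul' (pow_le_pow_left' hJI n) le_rfl
            _ = I ^ (n + 1 + 1) := by rw [← pow_add]
        exact sup_le (sup_le le_sup_left (h.trans le_sup_right)) le_sup_right

lemma span_range_mkQ_eq_top {R E ι : Type*} [Ring R] [AddCommGroup E] [Module R E]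
    {M N : Submodule R E} {v : ι → M} (h : M ≤ span R (Set.range fun i => (v i : E)) ⊔ N) :
    span R (Set.range fun i => (N.comap M.subtype).mkQ (v i)) = ⊤ := by
  rw [Set.range_comp' (N.comap M.subtype).mkQ v, span_image, map_mkQ_eq_top, eq_top_iff]
  intro w _
  obtain ⟨s, hs, r, hr, hsr⟩ := mem_sup.mp (h w.2)
  obtain ⟨s', hs', rfl⟩ : s ∈ (span R (Set.range v)).map M.subtype := by
    rwa [map_span, ← Set.range_comp]
  have hw : w = (w - s') + s' := (sub_add_cancel w s').symm
  rw [hw]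
  refine add_mem_sup ?_ hs'
  show (w : E) - s' ∈ N
  rwa [← hsr, subtype_apply, add_sub_cancel_left]

end Submodule

namespace PowerSeries
variable {A : Type*}

section Semiring
variable [Semiring A] {f g : A⟦X⟧} {m n : ℕ}

lemma X_pow_mul_mul_X_pow_mul (f g : A⟦X⟧) (m n : ℕ) :
    X ^ m * f * (X ^ n * g) = X ^ (m + n) * (f * g) := by
  rw [mul_assoc, ← mul_assoc f, (commute_X_pow f n).eq, pow_add]
  simp only [mul_assoc]

lemma X_pow_add_dvd_mul (hf : X ^ m ∣ f) (hg : X ^ n ∣ g) : X ^ (m + n) ∣ f * g := by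
  obtain ⟨f, rfl⟩ := hf
  obtain ⟨g, rfl⟩ := hg
  exact ⟨f * g, X_pow_mul_mul_X_pow_mul f g m n⟩

lemma coeff_add_mul_of_X_pow_dvd (hf : X ^ m ∣ f) (hg : X ^ n ∣ g) :
    coeff (m + n) (f * g) = coeff m f * coeff n g := by
  obtain ⟨f, rfl⟩ := hf
  obtain ⟨g, rfl⟩ := hg
  rw [X_pow_mul_mul_X_pow_mul]
  simp [coeff_X_pow_mul']

variable {R : Type*} [CommSemiring R] [Algebra R A] (𝒜 : ℕ → Submodule R A)
  [SetLike.GradedMonoid 𝒜]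

def gradedSubalgebra : Subalgebra R A⟦X⟧ where
  carrier := {f | ∀ n, coeff n f ∈ 𝒜 n}
  mul_mem' {f g} hf hg n := by
    rw [coeff_mul]
    refine Submodule.sum_mem _ fun p hp => ?_
    rw [← Finset.HasAntidiagonal.mem_antidiagonal.mp hp]
    exact SetLike.mul_mem_graded (hf p.1) (hg p.2)
  add_mem' hf hg n := by
    rw [map_add]
    exact add_mem (hf n) (hg n)
  algebraMap_mem' r n := by
    rw [algebraMap_apply, coeff_C]
    split_ifs with h
    · exact h ▸ SetLike.algebraMap_mem_graded 𝒜 r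
    · exact zero_mem _

end Semiring

section Ring
variable [Ring A]

lemma one_add_C_mul_X_mul_mk_neg_pow (a : A) : (1 + C a * X) * mk (fun n => (-a) ^ n) = 1 := by
  ext (_ | n) <;> simp [add_mul, mul_assoc, coeff_one, coeff_succ_X_mul, pow_succ']

lemma mk_neg_pow_mul_one_add_C_mul_X (a : A) : mk (fun n => (-a) ^ n) * (1 + C a * X) = 1 := by
  ext (_ | n) <;> simp [mul_add, ← mul_assoc, coeff_one, coeff_succ_mul_X, pow_succ]

variable {R : Type*} [CommRing R] [Algebra R A] {𝒜 : ℕ → Submodule R A}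
  [SetLike.GradedMonoid 𝒜]

def gradedSubalgebra.unitOneAddCMulX {a : A} (ha : a ∈ 𝒜 1) : (gradedSubalgebra 𝒜)ˣ where
  val := ⟨1 + C a * X, add_mem (one_mem _) fun n => by
    rw [← pow_one X, coeff_C_mul_X_pow]
    split_ifs with h
    · exact h ▸ ha
    · exact zero_mem _⟩
  inv := ⟨mk fun n => (-a) ^ n, fun n => by
    simpa using SetLike.pow_mem_graded n (neg_mem ha)⟩
  val_inv := Subtype.ext (one_add_C_mul_X_mul_mk_neg_pow a)
  inv_val := Subtype.ext (mk_neg_pow_mul_one_add_C_mul_X a)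

lemma gradedSubalgebra.coe_unitOneAddCMulX {a : A} (ha : a ∈ 𝒜 1) :
    ((unitOneAddCMulX ha : gradedSubalgebra 𝒜) : A⟦X⟧) = 1 + C a * X :=
  rfl

end Ring

end PowerSeries

namespace Module.Basis
open TensorAlgebra
variable {R M κ : Type*} [CommRing R] [AddCommGroup M] [Module R M] (b : Basis κ R M)

lemma tensorAlgebra_apply (w : FreeMonoid κ) :
    b.tensorAlgebra w = FreeMonoid.lift (fun i => ι R (b i)) w := by
  simp only [tensorAlgebra, FreeAlgebra.basisFreeMonoid, FreeAlgebra.equivMonoidAlgebraFreeMonoid,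
    MonoidAlgebra.of_apply, LinearEquiv.trans_symm, AlgEquiv.toLinearEquiv_symm, map_apply,
    Finsupp.coe_basisSingleOne, LinearEquiv.trans_apply, MonoidAlgebra.coeffLinearEquiv_symm_apply,
    MonoidAlgebra.ofCoeff_single, AlgEquiv.coe_symm_toLinearEquiv, AlgEquiv.ofAlgHom_symm_apply,
    MonoidAlgebra.lift_single, one_smul]
  induction w using FreeMonoid.inductionOn' with
  | one => simp
  | of_mul x w ih => simp [ih]

lemma range_ι_pow_eq_span (n : ℕ) :
    LinearMap.range (ι R (M := M)) ^ n =
      Submodule.span R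
        (Set.range fun f : Fin n → κ => (List.ofFn fun i => ι R (b (f i))).prod) := by
  rw [LinearMap.range_eq_map, ← b.span_eq, Submodule.map_span, ← Set.range_comp,
    Submodule.span_range_pow]
  rfl

lemma linearIndependent_prod_ofFn_ι (n : ℕ) :
    LinearIndependent R fun f : Fin n → κ => (List.ofFn fun i => ι R (b (f i))).prod := by
  convert b.tensorAlgebra.linearIndependent.comp
    (fun f : Fin n → κ => FreeMonoid.ofList (List.ofFn f))
    (fun f g h => List.ofFn_injective (FreeMonoid.ofList.injective h)) with f
  simp [tensorAlgebra_apply, FreeMonoid.lift_ofList, List.map_ofFn, Function.comp_def]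

def tensorAlgebraPow (n : ℕ) : Basis (Fin n → κ) R ↥(LinearMap.range (ι R (M := M)) ^ n) :=
  (Basis.span (b.linearIndependent_prod_ofFn_ι n)).map
    (LinearEquiv.ofEq _ _ (b.range_ι_pow_eq_span n).symm)

lemma coe_tensorAlgebraPow_apply (n : ℕ) (f : Fin n → κ) :
    (b.tensorAlgebraPow n f : TensorAlgebra R M) = (List.ofFn fun i => ι R (b (f i))).prod := by
  simp [tensorAlgebraPow, Basis.span_apply]

end Module.Basis

section Magnus
open TensorAlgebra

variable (k α : Type*) [CommRing k]

def magnus : MonoidAlgebra k (FreeGroup α) →ₐ[k] (TensorAlgebra k (α →₀ k))⟦X⟧ :=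
  (gradedSubalgebra (LinearMap.range (ι k (M := α →₀ k)) ^ ·)).val.comp <|
    MonoidAlgebra.lift k _ _ <| (Units.coeHom _).comp <| FreeGroup.lift fun x =>
      gradedSubalgebra.unitOneAddCMulX (𝒜 := (LinearMap.range (ι k (M := α →₀ k)) ^ ·))
        (by rw [pow_one]; exact LinearMap.mem_range_self _ (Finsupp.single x 1))

def subOneProd {n : ℕ} (f : Fin n → α) : MonoidAlgebra k (FreeGroup α) :=
  (List.ofFn fun i => MonoidAlgebra.of k _ (FreeGroup.of (f i)) - 1).prod

variable {k α}

lemma magnus_of_of (x : α) :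
    magnus k α (MonoidAlgebra.of k _ (FreeGroup.of x)) = 1 + C (ι k (Finsupp.single x 1)) * X := by
  simp [magnus, gradedSubalgebra.coe_unitOneAddCMulX]

lemma coeff_magnus_mem (a : MonoidAlgebra k (FreeGroup α)) (n : ℕ) :
    coeff n (magnus k α a) ∈ LinearMap.range (ι k (M := α →₀ k)) ^ n :=
  (Subtype.prop _ : _ ∈ gradedSubalgebra _) n

lemma constantCoeff_magnus_of (g : FreeGroup α) :
    constantCoeff (magnus k α (MonoidAlgebra.of k _ g)) = 1 := by
  have h : (constantCoeff.toMonoidHom.comp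
      ((magnus k α).toMonoidHom.comp (MonoidAlgebra.of k _))) = 1 :=
    FreeGroup.ext_hom _ _ fun x => by
      show constantCoeff (magnus k α (MonoidAlgebra.of k _ (FreeGroup.of x))) = 1
      rw [magnus_of_of]
      simp
  exact DFunLike.congr_fun h g

lemma X_dvd_magnus_of_mem_span {a : MonoidAlgebra k (FreeGroup α)}
    (ha : a ∈ Submodule.span k (Set.range fun g => MonoidAlgebra.of k (FreeGroup α) g - 1)) :
    X ∣ magnus k α a := by
  induction ha using Submodule.span_induction with
  | mem _ h =>
    obtain ⟨g, rfl⟩ := h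
    rw [X_dvd_iff, map_sub, map_sub, constantCoeff_magnus_of, map_one, map_one, sub_self]
  | zero => simp
  | add _ _ _ _ hb hc =>
    rw [map_add]
    exact dvd_add hb hc
  | smul c _ _ hb =>
    obtain ⟨f, hf⟩ := hb
    exact ⟨c • f, by rw [map_smul, hf, mul_smul_comm]⟩

lemma coeff_one_magnus_of_sub_one (x : α) :
    coeff 1 (magnus k α (MonoidAlgebra.of k _ (FreeGroup.of x) - 1)) =
      ι k (Finsupp.single x 1) := by
  rw [map_sub, magnus_of_of, map_one]
  simp

end Magnus

variable {α : Type*}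

lemma of_sub_one_mem_augIdeal (g : FreeGroup α) : MonoidAlgebra.of ℚ _ g - 1 ∈ augIdeal α := by
  show _ ∈ RingHom.ker _
  simp

lemma of_sub_one_mul_of_sub_one_mem_augIdeal_sq (g h : FreeGroup α) :
    (MonoidAlgebra.of ℚ _ g - 1) * (MonoidAlgebra.of ℚ _ h - 1) ∈ augIdeal α ^ 2 :=
  pow_two (augIdeal α) ▸
    Submodule.mul_mem_mul (of_sub_one_mem_augIdeal g) (of_sub_one_mem_augIdeal h)

lemma augIdeal_le_span_of_sub_one :
    augIdeal α ≤
      Submodule.span ℚ (Set.range fun g : FreeGroup α => MonoidAlgebra.of ℚ _ g - 1) := by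
  intro a ha
  have hε : MonoidAlgebra.lift ℚ ℚ _ 1 a = 0 := ha
  simpa [hε] using MonoidAlgebra.sub_algebraMap_lift_one_mem_span a

def generatorSpan (α : Type*) : Submodule ℚ (MonoidAlgebra ℚ (FreeGroup α)) :=
  Submodule.span ℚ (Set.range fun x : α => MonoidAlgebra.of ℚ _ (FreeGroup.of x) - 1)

lemma generatorSpan_le_augIdeal : generatorSpan α ≤ augIdeal α :=
  Submodule.span_le.mpr (by rintro _ ⟨x, rfl⟩; exact of_sub_one_mem_augIdeal _)

lemma augIdeal_le_generatorSpan_sup_sq : augIdeal α ≤ generatorSpan α ⊔ augIdeal α ^ 2 := by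
  refine augIdeal_le_span_of_sub_one.trans (Submodule.span_le.mpr ?_)
  rintro _ ⟨g, rfl⟩
  show MonoidAlgebra.of ℚ _ g - 1 ∈ _
  induction g with
  | C1 =>
    rw [map_one, sub_self]
    exact zero_mem _
  | of x => exact Submodule.mem_sup_left (Submodule.subset_span ⟨x, rfl⟩)
  | inv_of x h =>
    rw [MonoidAlgebra.of_inv_sub_one]
    exact sub_mem (neg_mem h)
      (Submodule.mem_sup_right (of_sub_one_mul_of_sub_one_mem_augIdeal_sq _ _))
  | mul g h hg hh =>
    rw [MonoidAlgebra.of_mul_sub_one]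
    exact add_mem (add_mem hg hh)
      (Submodule.mem_sup_right (of_sub_one_mul_of_sub_one_mem_augIdeal_sq _ _))

lemma generatorSpan_pow (n : ℕ) :
    generatorSpan α ^ n =
      Submodule.span ℚ (Set.range (subOneProd ℚ α (n := n))) :=
  Submodule.span_range_pow _ n

lemma subOneProd_mem_Ipow {n : ℕ} (f : Fin n → α) : subOneProd ℚ α f ∈ Ipow α n :=
  pow_le_pow_left' generatorSpan_le_augIdeal n
    ((generatorSpan_pow n).ge (Submodule.subset_span ⟨f, rfl⟩))

lemma Ipow_le_span_subOneProd_sup (n : ℕ) :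
    Ipow α n ≤ Submodule.span ℚ (Set.range (subOneProd ℚ α (n := n))) ⊔ Ipow α (n + 1) := by
  rw [← generatorSpan_pow]
  exact Submodule.pow_le_pow_sup_pow_succ generatorSpan_le_augIdeal
    augIdeal_le_generatorSpan_sup_sq n

lemma X_pow_dvd_magnus_of_mem_Ipow {n : ℕ} {a : MonoidAlgebra ℚ (FreeGroup α)}
    (ha : a ∈ Ipow α n) : X ^ n ∣ magnus ℚ α a := by
  induction n generalizing a with
  | zero => simp
  | succ n ih =>
    rw [Ipow, pow_succ] at ha
    refine Submodule.mul_induction_on ha (fun b hb c hc => ?_) (fun b c hb hc => ?_)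
    · rw [map_mul]
      exact X_pow_add_dvd_mul (ih hb)
        (by simpa using X_dvd_magnus_of_mem_span (augIdeal_le_span_of_sub_one hc))
    · rw [map_add]
      exact dvd_add hb hc

lemma coeff_magnus_mul_of_mem_Ipow {m n : ℕ} {a b : MonoidAlgebra ℚ (FreeGroup α)}
    (ha : a ∈ Ipow α m) (hb : b ∈ Ipow α n) :
    coeff (m + n) (magnus ℚ α (a * b)) = coeff m (magnus ℚ α a) * coeff n (magnus ℚ α b) := by
  rw [map_mul]
  exact coeff_add_mul_of_X_pow_dvd (X_pow_dvd_magnus_of_mem_Ipow ha)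
    (X_pow_dvd_magnus_of_mem_Ipow hb)

lemma coeff_magnus_subOneProd {n : ℕ} (f : Fin n → α) :
    coeff n (magnus ℚ α (subOneProd ℚ α f)) =
      (List.ofFn fun i => TensorAlgebra.ι ℚ (Finsupp.single (f i) 1)).prod := by
  induction n with
  | zero => simp [subOneProd]
  | succ n ih =>
    have hf : subOneProd ℚ α f =
        (MonoidAlgebra.of ℚ _ (FreeGroup.of (f 0)) - 1) * subOneProd ℚ α fun i => f i.succ := by
      simp [subOneProd, List.ofFn_succ]
    have h1 : MonoidAlgebra.of ℚ _ (FreeGroup.of (f 0)) - 1 ∈ Ipow α 1 := by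
      rw [Ipow, pow_one]
      exact of_sub_one_mem_augIdeal _
    have h := coeff_magnus_mul_of_mem_Ipow h1 (subOneProd_mem_Ipow fun i => f i.succ)
    rw [add_comm] at h
    rw [hf, h, coeff_one_magnus_of_sub_one, ih, List.ofFn_succ, List.prod_cons]

lemma mul_mem_taPiece {m n : ℕ} {a b : TensorAlgebra ℚ (α →₀ ℚ)} (ha : a ∈ taPiece α m)
    (hb : b ∈ taPiece α n) : a * b ∈ taPiece α (m + n) :=
  SetLike.mul_mem_graded (A := (LinearMap.range (TensorAlgebra.ι ℚ (M := α →₀ ℚ)) ^ ·)) ha hb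

def magnusLeadingCoeff (α : Type*) (n : ℕ) : grPiece α n →ₗ[ℚ] taPiece α n :=
  Submodule.liftQ _
    (LinearMap.codRestrict (taPiece α n)
      (((coeff n).restrictScalars ℚ) ∘ₗ (magnus ℚ α).toLinearMap ∘ₗ (Ipow α n).subtype)
      fun v => coeff_magnus_mem v.1 n)
    fun v hv => Subtype.ext <| by
      exact (X_pow_dvd_iff.mp (X_pow_dvd_magnus_of_mem_Ipow (n := n + 1) hv)) n n.lt_succ_self

lemma magnusLeadingCoeff_mkg {n : ℕ} (v : Ipow α n) :
    (magnusLeadingCoeff α n (mkg α n v) : TensorAlgebra ℚ (α →₀ ℚ)) = coeff n (magnus ℚ α v) :=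
  rfl

def taPieceBasis (α : Type*) (n : ℕ) : Module.Basis (Fin n → α) ℚ (taPiece α n) :=
  Finsupp.basisSingleOne.tensorAlgebraPow n

lemma coe_taPieceBasis_apply {n : ℕ} (f : Fin n → α) :
    (taPieceBasis α n f : TensorAlgebra ℚ (α →₀ ℚ)) =
      (List.ofFn fun i => TensorAlgebra.ι ℚ (Finsupp.single (f i) 1)).prod := by
  have h := (Finsupp.basisSingleOne (R := ℚ) (ι := α)).coe_tensorAlgebraPow_apply n f
  simp only [Finsupp.coe_basisSingleOne] at h
  exact h

lemma magnusLeadingCoeff_mkg_subOneProd {n : ℕ} (f : Fin n → α) :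
    magnusLeadingCoeff α n (mkg α n ⟨_, subOneProd_mem_Ipow f⟩) = taPieceBasis α n f := by
  apply Subtype.ext
  rw [magnusLeadingCoeff_mkg, coeff_magnus_subOneProd, coe_taPieceBasis_apply]

lemma span_range_mkg_subOneProd (n : ℕ) :
    Submodule.span ℚ (Set.range fun f : Fin n → α => mkg α n ⟨_, subOneProd_mem_Ipow f⟩) = ⊤ :=
  Submodule.span_range_mkQ_eq_top (Ipow_le_span_subOneProd_sup n)

def grPieceEquiv (α : Type*) (n : ℕ) : grPiece α n ≃ₗ[ℚ] taPiece α n :=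
  .ofLinearMap (magnusLeadingCoeff α n)
    ((taPieceBasis α n).constr ℚ fun f => mkg α n ⟨_, subOneProd_mem_Ipow f⟩)
    ((taPieceBasis α n).ext fun f => by simp [magnusLeadingCoeff_mkg_subOneProd])
    (LinearMap.ext_on_range (span_range_mkg_subOneProd n) fun f => by
      simp [magnusLeadingCoeff_mkg_subOneProd])

lemma grPieceEquiv_mkg {n : ℕ} (v : Ipow α n) :
    (grPieceEquiv α n (mkg α n v) : TensorAlgebra ℚ (α →₀ ℚ)) = coeff n (magnus ℚ α v) :=
  magnusLeadingCoeff_mkg v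

/-- The product on the associated graded, transported from `T(V)`; `grMul_mkg` identifies it with
the product induced by `ℚ[F(X)]`. -/
def grMul (α : Type*) (m n : ℕ) (u : grPiece α m) (v : grPiece α n) : grPiece α (m + n) :=
  (grPieceEquiv α (m + n)).symm
    ⟨grPieceEquiv α m u * grPieceEquiv α n v, mul_mem_taPiece (Subtype.prop _) (Subtype.prop _)⟩

lemma grPieceEquiv_grMul {m n : ℕ} (u : grPiece α m) (v : grPiece α n) :
    (grPieceEquiv α (m + n) (grMul α m n u v) : TensorAlgebra ℚ (α →₀ ℚ)) =
      grPieceEquiv α m u * grPieceEquiv α n v := by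
  simp [grMul]

lemma grMul_mkg {m n : ℕ} (x : Ipow α m) (y : Ipow α n) (hxy : x.1 * y.1 ∈ Ipow α (m + n)) :
    grMul α m n (mkg α m x) (mkg α n y) = mkg α (m + n) ⟨x.1 * y.1, hxy⟩ := by
  rw [grMul, LinearEquiv.symm_apply_eq]
  exact Subtype.ext (coeff_magnus_mul_of_mem_Ipow x.2 y.2).symm

end

theorem associatedGraded_groupAlgebra_freeGroup_iso_tensorAlgebra (X : Type*) :
    -- the (well-defined) multiplication of the associated graded algebra …
    ∃ gmul : ∀ m n : ℕ, grPiece X m → grPiece X n → grPiece X (m + n),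
      (∀ (m n : ℕ) (x : Ipow X m) (y : Ipow X n),
        gmul m n (mkg X m x) (mkg X n y) =
          mkg X (m + n) ⟨x.1 * y.1, by
            have hx : x.1 ∈ augIdeal X ^ m := x.2
            have hy : y.1 ∈ augIdeal X ^ n := y.2
            show x.1 * y.1 ∈ augIdeal X ^ (m + n)
            exact (pow_add (augIdeal X) m n).symm ▸ Submodule.mul_mem_mul hx hy⟩) ∧
      -- … corresponds under ℚ-linear equivalences `eₙ : Iⁿ/Iⁿ⁺¹ ≃ T(V)ₙ` …
      ∃ e : ∀ n : ℕ, grPiece X n ≃ₗ[ℚ] taPiece X n,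
        -- … to the multiplication of the tensor algebra (a graded algebra isomorphism),
        (∀ (m n : ℕ) (u : grPiece X m) (v : grPiece X n),
          ((e (m + n)) (gmul m n u v) : TensorAlgebra ℚ (X →₀ ℚ)) =
            ((e m) u : TensorAlgebra ℚ (X →₀ ℚ)) * ((e n) v : TensorAlgebra ℚ (X →₀ ℚ))) ∧
        -- which is unital,
        (((e 0) (mkg X 0 ⟨1, by
            show (1 : MonoidAlgebra ℚ (FreeGroup X)) ∈ augIdeal X ^ 0
            exact (pow_zero (augIdeal X)).symm ▸ Submodule.one_le.mp le_rfl⟩) :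
          TensorAlgebra ℚ (X →₀ ℚ)) = 1) ∧
        -- and sends the class of `x − 1` in `I/I²` to the degree-one generator `x ∈ V`.
        (∀ x : X,
          ((e 1) (mkg X 1 ⟨MonoidAlgebra.of ℚ (FreeGroup X) (FreeGroup.of x) - 1, by
              show _ ∈ augIdeal X ^ 1
              refine (pow_one (augIdeal X)).symm ▸ ?_
              show _ ∈ RingHom.ker ((MonoidAlgebra.lift ℚ ℚ (FreeGroup X)) 1).toRingHom
              rw [RingHom.mem_ker]
              simp⟩) : TensorAlgebra ℚ (X →₀ ℚ)) =
            TensorAlgebra.ι ℚ (Finsupp.single x (1 : ℚ))) := by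
  refine ⟨grMul X, fun m n x y => grMul_mkg x y _, grPieceEquiv X,
    fun m n u v => grPieceEquiv_grMul u v, by simp [grPieceEquiv_mkg], fun x => ?_⟩
  rw [grPieceEquiv_mkg]
  exact coeff_one_magnus_of_sub_one x
end
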